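/- Let ψ_n(q) = a(2^n − 1; q). Then for all m, n with 2 ≤ 2m < n, ψ_n(q) − q^{2^{2m} − 1}·ψ_{n−2m}(q^{4^m}) = ψ_{2m}(q). -/

import Mathlib

open Polynomial

/-- The Stern polynomials: a(0;z)=0, a(1;z)=1, a(2n;z)=a(n;z^2),
    a(2n+1;z)=z*a(n;z^2)+a(n+1;z^2). -/
noncomputable def stern : ℕ → Polynomial ℤ
  | 0 => 0
  | 1 => 1
  | (n+2) =>
    if _h : n % 2 = 0 then (stern (n/2+1)).comp (X^2)
    else X * (stern (n/2+1)).comp (X^2) + (stern (n/2+2)).comp (X^2)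
  decreasing_by all_goals omega

/-!
Writing `ψ n = stern (2^n - 1)`, the Stern recursion gives `ψ (n + 1) = X * ψ n ∘ X² + 1` for
every `n`, because `stern (2^n) = 1`. Iterating this `k` times yields the splitting
`ψ (k + j) = ψ k + X^(2^k - 1) * ψ j ∘ X^(2^k)`, and the theorem is the case `k = 2m`.
-/

lemma stern_two_mul (n : ℕ) : stern (2 * n) = (stern n).comp (X ^ 2) := by
  cases n with
  | zero => simp [stern]
  | succ n =>
    rw [show 2 * (n + 1) = 2 * n + 2 by ring, stern]
    simp

lemma stern_two_mul_add_one (n : ℕ) :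
    stern (2 * n + 1) = X * (stern n).comp (X ^ 2) + (stern (n + 1)).comp (X ^ 2) := by
  cases n with
  | zero => simp [stern]
  | succ n =>
    rw [show 2 * (n + 1) + 1 = (2 * n + 1) + 2 by ring, stern]
    simp [show (2 * n + 1) / 2 = n by omega]

lemma stern_two_pow (k : ℕ) : stern (2 ^ k) = 1 := by
  induction k with
  | zero => simp [stern]
  | succ k ih => rw [pow_succ', stern_two_mul, ih, one_comp]

noncomputable def sternPsi (n : ℕ) : ℤ[X] := stern (2 ^ n - 1)

lemma sternPsi_zero : sternPsi 0 = 0 := by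
  simp [sternPsi, stern]

lemma sternPsi_succ (n : ℕ) : sternPsi (n + 1) = X * (sternPsi n).comp (X ^ 2) + 1 := by
  cases n with
  | zero => simp [sternPsi, stern]
  | succ n =>
    have hpos := Nat.one_le_two_pow (n := n)
    have hodd : 2 ^ (n + 2) - 1 = 2 * (2 ^ (n + 1) - 1) + 1 := by
      rw [pow_succ _ (n + 1), pow_succ]; omega
    have hhalf : 2 ^ (n + 1) - 1 + 1 = 2 ^ (n + 1) := by
      rw [pow_succ]; omega
    rw [sternPsi, sternPsi, hodd, stern_two_mul_add_one, hhalf, stern_two_pow, one_comp]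

lemma sternPsi_add (k j : ℕ) :
    sternPsi (k + j) = sternPsi k + X ^ (2 ^ k - 1) * (sternPsi j).comp (X ^ 2 ^ k) := by
  induction k with
  | zero => simp [sternPsi_zero]
  | succ k ih =>
    have hpos := Nat.one_le_two_pow (n := k)
    have hshift : (X : ℤ[X]) * X ^ (2 * (2 ^ k - 1)) = X ^ (2 ^ (k + 1) - 1) := by
      rw [← pow_succ']
      congr 1
      rw [pow_succ]
      omega
    rw [Nat.add_right_comm, sternPsi_succ, ih, sternPsi_succ, add_comp, mul_comp, comp_assoc,
      X_pow_comp, X_pow_comp, ← pow_mul, ← pow_mul, ← pow_succ', mul_add, ← mul_assoc, hshift]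
    ring

theorem psi_main_recurrence_general (m n : ℕ) (hn : 2 * m < n) :
    stern (2^n - 1) - X^(2^(2*m) - 1) * (stern (2^(n-2*m) - 1)).comp (X^(4^m)) =
      stern (2^(2*m) - 1) := by
  have hsplit := sternPsi_add (2 * m) (n - 2 * m)
  rw [Nat.add_sub_cancel' hn.le] at hsplit
  rw [show (4 : ℕ) ^ m = 2 ^ (2 * m) by rw [pow_mul]; norm_num]
  simp only [sternPsi] at hsplit
  rw [hsplit, add_sub_cancel_right]

theorem psi_main_recurrence (m n : ℕ) (hm : 2 ≤ 2 * m) (hn : 2 * m < n) :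
    stern (2^n - 1) - X^(2^(2*m) - 1) * (stern (2^(n-2*m) - 1)).comp (X^(4^m)) =
      stern (2^(2*m) - 1) :=
  psi_main_recurrence_general m n hn
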